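/- Let V = ℝ^d×{0} ⊆ ℝ^{2n} and suppose r₁ ≥ r₂ > 0. For every p = (x,y,z) in the type-1 rectangle R̄_{1,V}(0,r), the Heisenberg distance from p to its horizontal projection P_𝕍(p) = (x^d, 0, 0) satisfies d_H(P_𝕍(p), p) ≤ 3·(r₁r₂)^{1/2}. -/

import Mathlib

open scoped RealInnerProductSpace

/-- The underlying set of the Heisenberg group `ℍⁿ = ℝⁿ × ℝⁿ × ℝ`. -/
abbrev Heis (n : ℕ) := EuclideanSpace ℝ (Fin n) × EuclideanSpace ℝ (Fin n) × ℝ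

/-- The Heisenberg group operation. -/
noncomputable def hMul {n : ℕ} (p p' : Heis n) : Heis n :=
  (p.1 + p'.1, p.2.1 + p'.2.1,
    p.2.2 + p'.2.2 + 2 * (⟪p.1, p'.2.1⟫ - ⟪p.2.1, p'.1⟫))

/-- The Heisenberg group inverse. -/
def hInv {n : ℕ} (p : Heis n) : Heis n := (-p.1, -p.2.1, -p.2.2)

/-- `|(a,b)|`, the Euclidean norm of a pair of vectors viewed in `ℝ^{2n}`. -/
noncomputable def pnorm {n : ℕ} (a b : EuclideanSpace ℝ (Fin n)) : ℝ :=
  Real.sqrt (‖a‖ ^ 2 + ‖b‖ ^ 2)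

/-- The homogeneous (Korányi) norm. -/
noncomputable def hNorm {n : ℕ} (p : Heis n) : ℝ :=
  (pnorm p.1 p.2.1 ^ 4 + p.2.2 ^ 2) ^ ((1 : ℝ) / 4)

/-- The left-invariant Heisenberg metric `d_ℍ(p,p') = ‖p⁻¹ * p'‖_ℍ`. -/
noncomputable def dH {n : ℕ} (p p' : Heis n) : ℝ := hNorm (hMul (hInv p) p')

/-- `x ↦ x^d = (x₁,…,x_d,0,…,0)`. -/
noncomputable def trunc {n : ℕ} (d : ℕ) (x : EuclideanSpace ℝ (Fin n)) :
    EuclideanSpace ℝ (Fin n) :=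
  WithLp.toLp 2 (fun i : Fin n => if (i : ℕ) < d then x i else 0)

/-- `x ↦ x⊥ = (0,…,0,x_{d+1},…,x_n)`. -/
noncomputable def truncPerp {n : ℕ} (d : ℕ) (x : EuclideanSpace ℝ (Fin n)) :
    EuclideanSpace ℝ (Fin n) :=
  WithLp.toLp 2 (fun i : Fin n => if (i : ℕ) < d then 0 else x i)

/-- The type-1 rectangle `R̄_{1,V}(0,r)` for `V = ℝ^d × {0}`. -/
noncomputable def rect1 (n d : ℕ) (r₁ r₂ : ℝ) : Set (Heis n) :=
  {p | ‖trunc d p.1‖ ≤ r₁ ∧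
    pnorm (truncPerp d p.1) p.2.1 ^ 4 +
      |p.2.2 + 2 * ⟪trunc d p.1, trunc d p.2.1⟫| ^ 2 ≤ r₂ ^ 4}

/-- The type-2 rectangle `R̄_{2,V}(0,r)` for `V = ℝ^d × {0}`. -/
noncomputable def rect2 (n d : ℕ) (r₁ r₂ : ℝ) : Set (Heis n) :=
  {p | ‖trunc d p.1‖ ≤ r₁ ∧
    pnorm (truncPerp d p.1) p.2.1 ^ 4 +
      |p.2.2 - 2 * ⟪trunc d p.1, trunc d p.2.1⟫| ^ 2 ≤ r₂ ^ 4}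

/-! Left translation by the inverse of `P_𝕍(p) = (x^d, 0, 0)` maps `p` to
`(x⊥, y, z - 2⟨x^d, y^d⟩)`. The rectangle bounds `|(x⊥, y)|` by `r₂` and the vertical
coordinate by `|z + 2⟨x^d, y^d⟩| + 4|⟨x^d, y^d⟩| ≤ r₂² + 4 r₁ r₂ ≤ 5 r₁ r₂`, so the Korányi
norm is at most `26^{1/4} (r₁ r₂)^{1/2}`. -/

section Truncation

variable {n : ℕ} (d : ℕ) (x y : EuclideanSpace ℝ (Fin n))

theorem inner_trunc_left : ⟪trunc d x, y⟫ = ⟪trunc d x, trunc d y⟫ := by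
  simp only [PiLp.inner_apply, RCLike.inner_apply, starRingEnd_apply, star_trivial]
  refine Finset.sum_congr rfl fun i _ => ?_
  by_cases h : (i : ℕ) < d <;> simp [trunc, h]

theorem neg_trunc_add_self : -trunc d x + x = truncPerp d x := by
  ext i
  by_cases h : (i : ℕ) < d <;> simp [trunc, truncPerp, h]

theorem norm_trunc_le : ‖trunc d x‖ ≤ ‖x‖ := by
  rw [EuclideanSpace.norm_eq, EuclideanSpace.norm_eq]
  gcongr with i
  by_cases h : (i : ℕ) < d <;> simp [trunc, h]

end Truncation

theorem norm_right_le_pnorm {n : ℕ} (a b : EuclideanSpace ℝ (Fin n)) : ‖b‖ ≤ pnorm a b :=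
  Real.le_sqrt_of_sq_le (le_add_of_nonneg_left (sq_nonneg _))

theorem hNorm_le {n : ℕ} {a b : EuclideanSpace ℝ (Fin n)} {t M : ℝ} (hM : 0 ≤ M)
    (h : pnorm a b ^ 4 + t ^ 2 ≤ M ^ 4) : hNorm (a, b, t) ≤ M := by
  calc hNorm (a, b, t) ≤ (M ^ 4) ^ ((1 : ℝ) / 4) :=
        Real.rpow_le_rpow (by positivity) h (by norm_num)
    _ = M := by
        rw [← Real.rpow_natCast, ← Real.rpow_mul hM]
        norm_num

theorem dH_trunc_zero_zero {n : ℕ} (d : ℕ) (p : Heis n) :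
    dH (trunc d p.1, (0 : EuclideanSpace ℝ (Fin n)), (0 : ℝ)) p =
      hNorm (truncPerp d p.1, p.2.1, p.2.2 - 2 * ⟪trunc d p.1, trunc d p.2.1⟫) := by
  simp only [dH, hMul, hInv, neg_zero, zero_add, inner_neg_left, inner_zero_left,
    neg_trunc_add_self]
  rw [inner_trunc_left d p.1 p.2.1]
  ring_nf

section Rect1

variable {n d : ℕ} {r₁ r₂ : ℝ} {p : Heis n}

theorem pnorm_le_of_mem_rect1 (hr₂ : 0 ≤ r₂) (hp : p ∈ rect1 n d r₁ r₂) :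
    pnorm (truncPerp d p.1) p.2.1 ≤ r₂ :=
  le_of_pow_le_pow_left₀ four_ne_zero hr₂ (le_of_add_le_of_nonneg_left hp.2 (by positivity))

theorem abs_add_le_of_mem_rect1 (hp : p ∈ rect1 n d r₁ r₂) :
    |p.2.2 + 2 * ⟪trunc d p.1, trunc d p.2.1⟫| ≤ r₂ ^ 2 := by
  refine le_of_pow_le_pow_left₀ two_ne_zero (by positivity) ?_
  rw [← pow_mul]
  exact le_of_add_le_of_nonneg_right hp.2 (by positivity)

theorem abs_inner_trunc_le_of_mem_rect1 (hr₂ : 0 ≤ r₂) (hp : p ∈ rect1 n d r₁ r₂) :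
    |⟪trunc d p.1, trunc d p.2.1⟫| ≤ r₁ * r₂ :=
  calc |⟪trunc d p.1, trunc d p.2.1⟫| ≤ ‖trunc d p.1‖ * ‖trunc d p.2.1‖ :=
        abs_real_inner_le_norm _ _
    _ ≤ r₁ * r₂ := by
        gcongr
        · exact (norm_nonneg _).trans hp.1
        · exact hp.1
        · calc ‖trunc d p.2.1‖ ≤ ‖p.2.1‖ := norm_trunc_le d _
            _ ≤ pnorm (truncPerp d p.1) p.2.1 := norm_right_le_pnorm _ _
            _ ≤ r₂ := pnorm_le_of_mem_rect1 hr₂ hp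

theorem abs_sub_le_of_mem_rect1 (hr₂ : 0 ≤ r₂) (hr : r₂ ≤ r₁) (hp : p ∈ rect1 n d r₁ r₂) :
    |p.2.2 - 2 * ⟪trunc d p.1, trunc d p.2.1⟫| ≤ 5 * (r₁ * r₂) := by
  set I := ⟪trunc d p.1, trunc d p.2.1⟫
  calc |p.2.2 - 2 * I| = |(p.2.2 + 2 * I) - 4 * I| := by ring_nf
    _ ≤ |p.2.2 + 2 * I| + |4 * I| := abs_sub _ _
    _ ≤ r₂ ^ 2 + 4 * (r₁ * r₂) := by
        rw [abs_mul, abs_of_pos (four_pos : (0 : ℝ) < 4)]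
        gcongr
        exacts [abs_add_le_of_mem_rect1 hp, abs_inner_trunc_le_of_mem_rect1 hr₂ hp]
    _ ≤ 5 * (r₁ * r₂) := by nlinarith

end Rect1

theorem rect1_dist_to_horizontal_projection_general {n d : ℕ} {r₁ r₂ : ℝ}
    (hr₂ : 0 < r₂) (hr : r₂ ≤ r₁) (p : Heis n) (hp : p ∈ rect1 n d r₁ r₂) :
    dH (trunc d p.1, (0 : EuclideanSpace ℝ (Fin n)), (0 : ℝ)) p ≤ 3 * Real.sqrt (r₁ * r₂) := by
  rw [dH_trunc_zero_zero]
  refine hNorm_le (by positivity) ?_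
  have hρ : 0 ≤ r₁ * r₂ := mul_nonneg (hr₂.le.trans hr) hr₂.le
  have hP : pnorm (truncPerp d p.1) p.2.1 ^ 4 ≤ (r₁ * r₂) ^ 2 := by
    calc _ ≤ r₂ ^ 4 := by gcongr; exacts [Real.sqrt_nonneg _, pnorm_le_of_mem_rect1 hr₂.le hp]
      _ = (r₂ * r₂) ^ 2 := by ring
      _ ≤ (r₁ * r₂) ^ 2 := by gcongr
  have hZ : (p.2.2 - 2 * ⟪trunc d p.1, trunc d p.2.1⟫) ^ 2 ≤ (5 * (r₁ * r₂)) ^ 2 := by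
    obtain ⟨hlow, hupp⟩ := abs_le.mp (abs_sub_le_of_mem_rect1 hr₂.le hr hp)
    exact sq_le_sq' hlow hupp
  have hM : (3 * Real.sqrt (r₁ * r₂)) ^ 4 = 81 * (r₁ * r₂) ^ 2 := by
    rw [show (3 * Real.sqrt (r₁ * r₂)) ^ 4 = 81 * (Real.sqrt (r₁ * r₂) ^ 2) ^ 2 by ring,
      Real.sq_sqrt hρ]
  rw [hM]
  linarith [sq_nonneg (r₁ * r₂)]

theorem rect1_dist_to_horizontal_projection {n d : ℕ} (hd : d ≤ n) {r₁ r₂ : ℝ}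
    (hr₂ : 0 < r₂) (hr : r₂ ≤ r₁) (p : Heis n) (hp : p ∈ rect1 n d r₁ r₂) :
    dH (trunc d p.1, (0 : EuclideanSpace ℝ (Fin n)), (0 : ℝ)) p ≤ 3 * Real.sqrt (r₁ * r₂) :=
  rect1_dist_to_horizontal_projection_general hr₂ hr p hp
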